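/- Let T = ℝ/ℤ be the quotient group of the Sorgenfrey line by the subgroup ℤ, endowed with the quotient topology. Then T is an H-closed paratopological group: for every Hausdorff paratopological group H and every injective group homomorphism φ from T into H that is a topological embedding, the image φ(T) is closed in H. -/

import Mathlib

/-!
Let `h` lie in the closure of `φ(T)` and pull the neighbourhood filter of `h` back to `[0, 1]`;
by compactness of `[0, 1]` in the usual topology it clusters at some `g`. Since `x ↦ φ(x mod 1)`
is right-continuous and additive, `h = φ(g)`: a point `φ(r)` near `h` with `r ≥ g` close to `g` is
near `φ(g)`, while for `r ≤ g` one has `φ(g) = φ(r) + φ(g - r)` with `φ(g - r)` close to `0`, which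
is near `h + 0` by continuity of addition alone.
-/

open Topology

/-- The Sorgenfrey topology on `ℝ`: generated by the half-open intervals `[a, b)`. -/
def sorgenfreyTopology : TopologicalSpace ℝ :=
  TopologicalSpace.generateFrom {s : Set ℝ | ∃ a b : ℝ, s = Set.Ico a b}

/-- The quotient group `ℝ/ℤ` of the Sorgenfrey line by the subgroup `ℤ` of integers. -/
def SorgenfreyCircle : Type := ℝ ⧸ AddSubgroup.zmultiples (1 : ℝ)

instance : AddCommGroup SorgenfreyCircle :=
  inferInstanceAs (AddCommGroup (ℝ ⧸ AddSubgroup.zmultiples (1 : ℝ)))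

/-- `SorgenfreyCircle` carries the quotient topology induced by the canonical
projection from the Sorgenfrey line. -/
instance : TopologicalSpace SorgenfreyCircle :=
  TopologicalSpace.coinduced (QuotientAddGroup.mk : ℝ → SorgenfreyCircle) sorgenfreyTopology

open Filter Set

theorem nhds_sorgenfreyTopology (a : ℝ) : @nhds ℝ sorgenfreyTopology a = 𝓝[≥] a := by
  refine le_antisymm (fun s hs => ?_) ?_
  · obtain ⟨b, hab, hsub⟩ := mem_nhdsGE_iff_exists_Ico_subset.1 hs
    have hopen : IsOpen[sorgenfreyTopology] (Ico a b) :=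
      TopologicalSpace.isOpen_generateFrom_of_mem ⟨a, b, rfl⟩
    exact mem_of_superset
      (@IsOpen.mem_nhds ℝ sorgenfreyTopology _ _ hopen (left_mem_Ico.2 hab)) hsub
  · rw [sorgenfreyTopology, TopologicalSpace.nhds_generateFrom]
    refine le_iInf₂ ?_
    rintro s ⟨has, c, d, rfl⟩
    exact le_principal_iff.2 (mem_of_superset (Ico_mem_nhdsGE has.2) (Ico_subset_Ico_left has.1))

namespace SorgenfreyCircle

def mk : ℝ →+ SorgenfreyCircle := QuotientAddGroup.mk' _

theorem tendsto_mk_nhdsGE (a : ℝ) : Tendsto mk (𝓝[≥] a) (𝓝 (mk a)) := by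
  rw [← nhds_sorgenfreyTopology]
  exact @Continuous.tendsto ℝ SorgenfreyCircle sorgenfreyTopology _ _ continuous_coinduced_rng a

theorem mk_image_Icc : mk '' Icc 0 1 = univ := by
  have : Fact ((0 : ℝ) < 1) := ⟨one_pos⟩
  have h := AddCircle.coe_image_Icc_eq (1 : ℝ) 0
  rw [zero_add] at h
  exact h

end SorgenfreyCircle

theorem IsCompact.exists_mapClusterPt_nhds_of_mem_closure_image {X Y : Type*}
    [TopologicalSpace X] [TopologicalSpace Y] {K : Set X} (hK : IsCompact K) {f : X → Y} {y : Y}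
    (hy : y ∈ closure (f '' K)) : ∃ x ∈ K, MapClusterPt y (𝓝 x) f := by
  have : NeBot (comap f (𝓝 y) ⊓ 𝓟 K) := by
    rwa [neBot_inf_comap_iff_map', map_principal, ← ClusterPt, ← mem_closure_iff_clusterPt]
  obtain ⟨x, hxK, hx⟩ := hK.exists_clusterPt (inf_le_right : comap f (𝓝 y) ⊓ 𝓟 K ≤ 𝓟 K)
  have hx' : NeBot (𝓝 x ⊓ comap f (𝓝 y)) := hx.mono inf_le_left
  rw [neBot_inf_comap_iff_map, inf_comm] at hx'
  exact ⟨x, hxK, hx'⟩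

namespace AddMonoidHom

variable {H : Type*} [AddMonoid H] [TopologicalSpace H] [T2Space H] [ContinuousAdd H]
  {f : ℝ →+ H}

theorem eq_of_mapClusterPt_of_continuousWithinAt_Ici (hf : ∀ x, ContinuousWithinAt f (Ici x) x)
    {g : ℝ} {h : H} (hcl : MapClusterPt h (𝓝 g) f) : f g = h := by
  refine eq_of_nhds_neBot (inf_neBot_iff.2 fun V hV N hN => ?_)
  obtain ⟨N', hN', W, hW, hadd⟩ : ∃ N' ∈ 𝓝 h, ∃ W ∈ 𝓝 (0 : H), ∀ y ∈ N', ∀ w ∈ W, y + w ∈ N := by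
    have hsum := (continuous_add.tendsto (h, (0 : H))).eventually_mem (by simpa using hN)
    rw [nhds_prod_eq] at hsum
    obtain ⟨N', hN', W, hW, hsub⟩ := mem_prod_iff.1 hsum
    exact ⟨N', hN', W, hW, fun y hy w hw => hsub (mk_mem_prod hy hw)⟩
  have hright : ∀ᶠ r in 𝓝 g, g ≤ r → f r ∈ V := mem_nhdsWithin_iff_eventually.1 (hf g hV)
  have hleft : ∀ᶠ r in 𝓝 g, r ≤ g → f (g - r) ∈ W := by
    have h0 : ∀ᶠ s in 𝓝 0, 0 ≤ s → f s ∈ W :=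
      mem_nhdsWithin_iff_eventually.1 (hf 0 (by rwa [map_zero]))
    have hsub : Tendsto (g - ·) (𝓝 g) (𝓝 0) := by
      simpa using (continuous_sub_left g).tendsto g
    exact (hsub.eventually h0).mono fun r hr hrg => hr (sub_nonneg.2 hrg)
  obtain ⟨r, ⟨hrN', hrN⟩, hrV, hrW⟩ :=
    ((mapClusterPt_iff_frequently.1 hcl _ (inter_mem hN' hN)).and_eventually
      (hright.and hleft)).exists
  rcases le_total g r with hgr | hrg
  · exact ⟨f r, hrV hgr, hrN⟩
  · refine ⟨f g, mem_of_mem_nhds hV, ?_⟩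
    simpa [← map_add] using hadd _ hrN' _ (hrW hrg)

theorem isClosed_image_of_continuousWithinAt_Ici (hf : ∀ x, ContinuousWithinAt f (Ici x) x)
    {K : Set ℝ} (hK : IsCompact K) : IsClosed (f '' K) := by
  refine isClosed_of_closure_subset fun h hh => ?_
  obtain ⟨g, hgK, hcl⟩ := hK.exists_mapClusterPt_nhds_of_mem_closure_image hh
  exact ⟨g, hgK, eq_of_mapClusterPt_of_continuousWithinAt_Ici hf hcl⟩

end AddMonoidHom

theorem sorgenfrey_circle_H_closed_general
    (H : Type*) [AddGroup H] [TopologicalSpace H] [T2Space H] [ContinuousAdd H]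
    (φ : SorgenfreyCircle →+ H)
    (hemb : IsEmbedding (φ : SorgenfreyCircle → H)) :
    IsClosed (Set.range φ) := by
  have hf : ∀ x, ContinuousWithinAt (φ.comp SorgenfreyCircle.mk) (Ici x) x := fun x =>
    (hemb.continuous.tendsto _).comp (SorgenfreyCircle.tendsto_mk_nhdsGE x)
  have hrange : range φ = φ.comp SorgenfreyCircle.mk '' Icc 0 1 := by
    rw [AddMonoidHom.coe_comp, image_comp, SorgenfreyCircle.mk_image_Icc, image_univ]
  rw [hrange]
  exact AddMonoidHom.isClosed_image_of_continuousWithinAt_Ici hf isCompact_Icc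

/-- The quotient `ℝ/ℤ` of the Sorgenfrey line, with the quotient topology, is an
H-closed paratopological group: for every Hausdorff paratopological group `H` and
every injective group homomorphism `φ` from it into `H` that is a topological
embedding, the image of `φ` is closed in `H`. -/
theorem sorgenfrey_circle_H_closed
    (H : Type*) [AddGroup H] [TopologicalSpace H] [T2Space H] [ContinuousAdd H]
    (φ : SorgenfreyCircle →+ H)
    (hinj : Function.Injective φ)
    (hemb : IsEmbedding (φ : SorgenfreyCircle → H)) :
    IsClosed (Set.range φ) :=
  sorgenfrey_circle_H_closed_general H φ hemb
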